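/- arXiv:2307.08021 — 2 statements merged into one kernel-verified Lean document; each statement's English description precedes it below -/
import Mathlib

section
/- For every subset Z ⊆ X_1 and every f ∈ C(X_1,ℝ), the a-weighted topological pressure satisfies P^a(T_1,Z,f) = sup_{{U_i}} P^a(T_1,Z,{U_i},f) = lim_{max_{1≤i≤k} diam U_i → 0} P^a(T_1,Z,{U_i},f), where the supremum and limit are taken over all tuples of open covers U_i of X_i, i=1,…,k. -/
open MeasureTheory Set Filter Topology
open scoped ENNReal symmDiff

namespace WTP

variable {k : ℕ}

/-- cumulative weight `a 1 + … + a i` (zero-indexed: `a 0 + … + a i`). -/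
noncomputable def cw (a : Fin k → ℝ) (i : Fin k) : ℝ := ∑ j ∈ Finset.Iic i, a j

/-- Birkhoff sum `S_n f = ∑_{l<n} f ∘ T^l`. -/
noncomputable def birk {X : Type*} (T : X → X) (f : X → ℝ) (n : ℕ) (x : X) : ℝ :=
  ∑ l ∈ Finset.range n, f (T^[l] x)

/-- a (finite) open cover of a topological space. -/
def IsOpenCover {X : Type*} [TopologicalSpace X] (𝒰 : Set (Set X)) : Prop :=
  𝒰.Finite ∧ (∀ U ∈ 𝒰, IsOpen U) ∧ ⋃₀ 𝒰 = Set.univ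

/-- pullback of a cover along a map. -/
def pullCov {X Y : Type*} (g : X → Y) (𝒰 : Set (Set Y)) : Set (Set X) :=
  (fun U => g ⁻¹' U) '' 𝒰

/-- the quantity `exp(−s·n + (1/a₁)·sup_{x∈A} S_{⌈a₁ n⌉} f(x))`, as an element of `ℝ≥0∞`. -/
noncomputable def pterm {X : Type*} (T1 : X → X) (f : X → ℝ) (a1 s : ℝ) (n : ℕ)
    (A : Set X) : ℝ≥0∞ :=
  ENNReal.ofReal (Real.exp (-(s * n) + (1 / a1) * sSup (birk T1 f ⌈a1 * (n : ℝ)⌉₊ '' A)))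

/-- the weighted Bowen ball `B_n^𝐚(x, ε)`. -/
def wBowen {X : Fin k → Type*} [∀ i, MetricSpace (X i)] {X1 : Type*}
    (T : ∀ i, X i → X i) (τ : ∀ i, X1 → X i) (a : Fin k → ℝ)
    (n : ℕ) (x : X1) (ε : ℝ) : Set X1 :=
  {y | ∀ i : Fin k, ∀ j < ⌈cw a i * (n : ℝ)⌉₊,
      dist ((T i)^[j] (τ i x)) ((T i)^[j] (τ i y)) < ε}

section Bowen

variable [NeZero k] {X : Fin k → Type*} [∀ i, MetricSpace (X i)] {X1 : Type*}
  [MeasurableSpace X1]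

/-- `Λ^{𝐚,s}_{N,ε}(Z,f)`. -/
noncomputable def lamBowenN (T1 : X1 → X1) (T : ∀ i, X i → X i) (τ : ∀ i, X1 → X i)
    (a : Fin k → ℝ) (f : X1 → ℝ) (s ε : ℝ) (N : ℕ) (Z : Set X1) : ℝ≥0∞ :=
  ⨅ (D : Set (ℕ × Set X1)) (_ : D.Countable)
    (_ : ∀ p ∈ D, N ≤ p.1 ∧ MeasurableSet p.2 ∧ ∃ x : X1, p.2 ⊆ wBowen T τ a p.1 x ε)
    (_ : Z ⊆ ⋃ p ∈ D, p.2),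
    ∑' p : D, pterm T1 f (a 0) s p.1.1 p.1.2

/-- `Λ^{𝐚,s}_{ε}(Z,f) = lim_{N→∞} Λ^{𝐚,s}_{N,ε}(Z,f)` (an increasing limit). -/
noncomputable def lamBowen (T1 : X1 → X1) (T : ∀ i, X i → X i) (τ : ∀ i, X1 → X i)
    (a : Fin k → ℝ) (f : X1 → ℝ) (s ε : ℝ) (Z : Set X1) : ℝ≥0∞ :=
  ⨆ N : ℕ, lamBowenN T1 T τ a f s ε N Z

/-- `P^𝐚(T₁, Z, ε, f) = inf {s : Λ^{𝐚,s}_ε(Z,f) = 0}`. -/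
noncomputable def PBowenEps (T1 : X1 → X1) (T : ∀ i, X i → X i) (τ : ∀ i, X1 → X i)
    (a : Fin k → ℝ) (Z : Set X1) (f : X1 → ℝ) (ε : ℝ) : EReal :=
  sInf (Real.toEReal '' {s : ℝ | lamBowen T1 T τ a f s ε Z = 0})

/-- the 𝐚-weighted topological pressure `P^𝐚(T₁, Z, f) = lim_{ε→0} P^𝐚(T₁, Z, ε, f)`
(an increasing limit as `ε` decreases to `0`). -/
noncomputable def PBowen (T1 : X1 → X1) (T : ∀ i, X i → X i) (τ : ∀ i, X1 → X i)
    (a : Fin k → ℝ) (Z : Set X1) (f : X1 → ℝ) : EReal :=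
  ⨆ ε : {e : ℝ // 0 < e}, PBowenEps T1 T τ a Z f ε.1

/-- `W^{𝐚,s}_{N,ε}(Z,f)`. -/
noncomputable def wBowenWN (T1 : X1 → X1) (T : ∀ i, X i → X i) (τ : ∀ i, X1 → X i)
    (a : Fin k → ℝ) (f : X1 → ℝ) (s ε : ℝ) (N : ℕ) (Z : Set X1) : ℝ≥0∞ :=
  ⨅ (D : Set (ℕ × Set X1 × ℝ≥0∞)) (_ : D.Countable)
    (_ : ∀ p ∈ D, N ≤ p.1 ∧ MeasurableSet p.2.1 ∧ 0 < p.2.2 ∧ p.2.2 ≠ ⊤ ∧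
        ∃ x : X1, p.2.1 ⊆ wBowen T τ a p.1 x ε)
    (_ : ∀ z ∈ Z, 1 ≤ ∑' p : D, (p.1.2.1).indicator (fun _ => p.1.2.2) z),
    ∑' p : D, p.1.2.2 * pterm T1 f (a 0) s p.1.1 p.1.2.1

/-- `W^{𝐚,s}_{ε}(Z,f)`. -/
noncomputable def wBowenW (T1 : X1 → X1) (T : ∀ i, X i → X i) (τ : ∀ i, X1 → X i)
    (a : Fin k → ℝ) (f : X1 → ℝ) (s ε : ℝ) (Z : Set X1) : ℝ≥0∞ :=
  ⨆ N : ℕ, wBowenWN T1 T τ a f s ε N Z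

/-- `P_W^𝐚(T₁, Z, ε, f)`. -/
noncomputable def PWBowenEps (T1 : X1 → X1) (T : ∀ i, X i → X i) (τ : ∀ i, X1 → X i)
    (a : Fin k → ℝ) (Z : Set X1) (f : X1 → ℝ) (ε : ℝ) : EReal :=
  sInf (Real.toEReal '' {s : ℝ | wBowenW T1 T τ a f s ε Z = 0})

/-- the average 𝐚-weighted topological pressure `P_W^𝐚(T₁, Z, f)`. -/
noncomputable def PWBowen (T1 : X1 → X1) (T : ∀ i, X i → X i) (τ : ∀ i, X1 → X i)
    (a : Fin k → ℝ) (Z : Set X1) (f : X1 → ℝ) : EReal :=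
  ⨆ ε : {e : ℝ // 0 < e}, PWBowenEps T1 T τ a Z f ε.1

end Bowen

section Local

variable [NeZero k] {X1 : Type*} [MeasurableSpace X1]

/-- the cover `⋁_{i=1}^k (τ_{i-1}^{-1} 𝒰_i)_0^{⌈(a_1+…+a_i) n⌉ - 1}` on the first space, where
`𝒱 i` is the pulled back cover `τ_{i-1}^{-1} 𝒰_i`. -/
def jointFiber (T1 : X1 → X1) (a : Fin k → ℝ) (𝒱 : Fin k → Set (Set X1)) (n : ℕ) :
    Set (Set X1) :=
  {A | ∃ V : Fin k → ℕ → Set X1,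
      (∀ i, ∀ l < ⌈cw a i * (n : ℝ)⌉₊, V i l ∈ 𝒱 i) ∧
      A = ⋂ i : Fin k, ⋂ l ∈ Finset.range ⌈cw a i * (n : ℝ)⌉₊, (T1^[l]) ⁻¹' V i l}

/-- `Λ^{𝐚,s}_{N,{𝒰_i}}(Z,f)`. -/
noncomputable def lamLocN (T1 : X1 → X1) (a : Fin k → ℝ) (𝒱 : Fin k → Set (Set X1))
    (f : X1 → ℝ) (s : ℝ) (N : ℕ) (Z : Set X1) : ℝ≥0∞ :=
  ⨅ (D : Set (ℕ × Set X1)) (_ : D.Countable)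
    (_ : ∀ p ∈ D, N ≤ p.1 ∧ MeasurableSet p.2 ∧ ∃ A ∈ jointFiber T1 a 𝒱 p.1, p.2 ⊆ A)
    (_ : Z ⊆ ⋃ p ∈ D, p.2),
    ∑' p : D, pterm T1 f (a 0) s p.1.1 p.1.2

/-- `Λ^{𝐚,s}_{{𝒰_i}}(Z,f)`. -/
noncomputable def lamLoc (T1 : X1 → X1) (a : Fin k → ℝ) (𝒱 : Fin k → Set (Set X1))
    (f : X1 → ℝ) (s : ℝ) (Z : Set X1) : ℝ≥0∞ :=
  ⨆ N : ℕ, lamLocN T1 a 𝒱 f s N Z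

/-- the local 𝐚-weighted topological pressure `P^𝐚(T₁, Z, {𝒰_i}, f)`, expressed through the
pulled-back covers `𝒱 i = τ_{i-1}^{-1} 𝒰_i`. -/
noncomputable def PLoc (T1 : X1 → X1) (a : Fin k → ℝ) (𝒱 : Fin k → Set (Set X1))
    (Z : Set X1) (f : X1 → ℝ) : EReal :=
  sInf (Real.toEReal '' {s : ℝ | lamLoc T1 a 𝒱 f s Z = 0})

/-- `W^{𝐚,s}_{N,{𝒰_i}}(Z,f)`. -/
noncomputable def wLocN (T1 : X1 → X1) (a : Fin k → ℝ) (𝒱 : Fin k → Set (Set X1))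
    (f : X1 → ℝ) (s : ℝ) (N : ℕ) (Z : Set X1) : ℝ≥0∞ :=
  ⨅ (D : Set (ℕ × Set X1 × ℝ≥0∞)) (_ : D.Countable)
    (_ : ∀ p ∈ D, N ≤ p.1 ∧ MeasurableSet p.2.1 ∧ 0 < p.2.2 ∧ p.2.2 ≠ ⊤ ∧
        ∃ A ∈ jointFiber T1 a 𝒱 p.1, p.2.1 ⊆ A)
    (_ : ∀ z ∈ Z, 1 ≤ ∑' p : D, (p.1.2.1).indicator (fun _ => p.1.2.2) z),
    ∑' p : D, p.1.2.2 * pterm T1 f (a 0) s p.1.1 p.1.2.1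

/-- `W^{𝐚,s}_{{𝒰_i}}(Z,f)`. -/
noncomputable def wLoc (T1 : X1 → X1) (a : Fin k → ℝ) (𝒱 : Fin k → Set (Set X1))
    (f : X1 → ℝ) (s : ℝ) (Z : Set X1) : ℝ≥0∞ :=
  ⨆ N : ℕ, wLocN T1 a 𝒱 f s N Z

/-- the local average 𝐚-weighted topological pressure `P_W^𝐚(T₁, Z, {𝒰_i}, f)`. -/
noncomputable def PWLoc (T1 : X1 → X1) (a : Fin k → ℝ) (𝒱 : Fin k → Set (Set X1))
    (Z : Set X1) (f : X1 → ℝ) : EReal :=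
  sInf (Real.toEReal '' {s : ℝ | wLoc T1 a 𝒱 f s Z = 0})

end Local

/-- iterated join `(𝒰)_0^{n-1} = ⋁_{l=0}^{n-1} T^{-l} 𝒰` of a cover. -/
def covJoinT {X : Type*} (T : X → X) (𝒰 : Set (Set X)) (n : ℕ) : Set (Set X) :=
  {A | ∃ u : ℕ → Set X, (∀ l < n, u l ∈ 𝒰) ∧
      A = ⋂ l ∈ Finset.range n, (T^[l]) ⁻¹' u l}

/-- the join `⋁_{j=i}^{k} 𝒱 j` of covers of a single space (in applications
`𝒱 j = τ_{j-1}^{-1} 𝒰_j`). -/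
def joinFrom {X1 : Type*} (𝒱 : Fin k → Set (Set X1)) (i : Fin k) : Set (Set X1) :=
  {A | ∃ V : Fin k → Set X1, (∀ j, i ≤ j → V j ∈ 𝒱 j) ∧ A = ⋂ j ∈ Finset.Ici i, V j}

/-- a finite measurable partition (indexed). -/
def IsPart {X : Type*} [MeasurableSpace X] {ι : Type*} (β : ι → Set X) : Prop :=
  (∀ i, MeasurableSet (β i)) ∧ (∀ i j, i ≠ j → Disjoint (β i) (β j)) ∧ ⋃ i, β i = Set.univ

/-- the static entropy `H_μ(β) = -∑ μ(B) log μ(B)` of a finite (indexed) partition. -/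
noncomputable def entH {X : Type*} [MeasurableSpace X] {ι : Type*} [Fintype ι]
    (μ : Measure X) (β : ι → Set X) : ℝ :=
  ∑ i, Real.negMulLog (μ (β i)).toReal

/-- the dynamical join `⋁_{l=0}^{n-1} T^{-l} β` of a partition. -/
def dynJoin {X : Type*} (T : X → X) {ι : Type*} (β : ι → Set X) (n : ℕ) :
    (Fin n → ι) → Set X :=
  fun c => ⋂ l : Fin n, (T^[(l : ℕ)]) ⁻¹' β (c l)

/-- the measure-theoretic entropy `h_μ(T, β) = lim_n (1/n) H_μ(⋁_{l<n} T^{-l}β)` of `T`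
relative to a finite partition. -/
noncomputable def hPart {X : Type*} [MeasurableSpace X] {ι : Type*} [Fintype ι]
    (μ : Measure X) (T : X → X) (β : ι → Set X) : EReal :=
  Filter.liminf (fun n : ℕ => ((entH μ (dynJoin T β n) / n : ℝ) : EReal)) Filter.atTop

/-- the Kolmogorov–Sinai entropy `h_μ(T)`. -/
noncomputable def hKS {X : Type*} [MeasurableSpace X] (μ : Measure X) (T : X → X) : EReal :=
  ⨆ p : (Σ m : ℕ, {β : Fin m → Set X // IsPart β}), hPart μ T p.2.1

/-- `H_μ(𝒰) = inf {H_μ(β) : β a finite measurable partition refining 𝒰}`. -/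
noncomputable def covH {X : Type*} [MeasurableSpace X] (μ : Measure X)
    (𝒰 : Set (Set X)) : ℝ :=
  sInf {h : ℝ | ∃ (m : ℕ) (β : Fin m → Set X), IsPart β ∧
      (∀ i, ∃ U ∈ 𝒰, β i ⊆ U) ∧ h = entH μ β}

/-- the local measure-theoretic entropy `h_μ(T, 𝒰) = lim_n (1/n) H_μ((𝒰)_0^{n-1})` of `T`
relative to an open cover. -/
noncomputable def hCov {X : Type*} [MeasurableSpace X] (μ : Measure X) (T : X → X)
    (𝒰 : Set (Set X)) : EReal :=
  Filter.liminf (fun n : ℕ => ((covH μ (covJoinT T 𝒰 n) / n : ℝ) : EReal)) Filter.atTop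

/-- `h⁺_μ(T,𝒰) = inf {h_μ(T,β) : β a finite measurable partition refining 𝒰}`. -/
noncomputable def hCovPlus {X : Type*} [MeasurableSpace X] (μ : Measure X) (T : X → X)
    (𝒰 : Set (Set X)) : EReal :=
  ⨅ p : (Σ m : ℕ, {β : Fin m → Set X // IsPart β ∧ ∀ i, ∃ U ∈ 𝒰, β i ⊆ U}),
    hPart μ T p.2.1

/-- the join `⋁_{j=i}^{k} γ j` of partitions of a single space (in applications
`γ j = τ_{j-1}^{-1} α_j`). -/
def partJoinFrom {X1 : Type*} {ι : Fin k → Type*} (γ : ∀ j, ι j → Set X1) (i : Fin k) :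
    (∀ j : {j : Fin k // i ≤ j}, ι j) → Set X1 :=
  fun c => ⋂ j : {j : Fin k // i ≤ j}, γ j (c j)

/-- the partition `⋁_{i=1}^k (γ_i)_0^{⌈(a_1+…+a_i)N⌉-1}` on the first space, where
`γ i = τ_{i-1}^{-1} α_i`. -/
def bigPartJoin {X1 : Type*} (T1 : X1 → X1) (a : Fin k → ℝ) {ι : Fin k → Type*}
    (γ : ∀ i, ι i → Set X1) (N : ℕ) :
    (∀ i : Fin k, Fin ⌈cw a i * (N : ℝ)⌉₊ → ι i) → Set X1 :=
  fun c => ⋂ i : Fin k, ⋂ l : Fin ⌈cw a i * (N : ℝ)⌉₊, (T1^[(l : ℕ)]) ⁻¹' γ i (c i l)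

/-- conditional entropy `H_μ(γ|β) = H_μ(γ ∨ β) - H_μ(β)`. -/
noncomputable def condEnt {X : Type*} [MeasurableSpace X] {ι κ : Type*} [Fintype ι] [Fintype κ]
    (μ : Measure X) (γ : ι → Set X) (β : κ → Set X) : ℝ :=
  entH μ (fun p : ι × κ => γ p.1 ∩ β p.2) - entH μ β

/-- the oscillation `w_f(⋁_{i=1}^k τ_{i-1}^{-1} 𝒰_i)` of `f` on the joined cover, where
`𝒱 i = τ_{i-1}^{-1} 𝒰_i`. -/
noncomputable def wfJoin {X1 : Type*} (f : X1 → ℝ) (𝒱 : Fin k → Set (Set X1)) : ℝ :=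
  sSup {d : ℝ | ∃ V : Fin k → Set X1, (∀ i, V i ∈ 𝒱 i) ∧
      ∃ x ∈ ⋂ i, V i, ∃ y ∈ ⋂ i, V i, d = |f x - f y|}

/-- the topological support of a measure. -/
def msupp {X : Type*} [TopologicalSpace X] [MeasurableSpace X] (μ : Measure X) : Set X :=
  {x | ∀ U : Set X, IsOpen U → x ∈ U → 0 < μ U}

/-!
If every element of each cover `𝒰 i` has diameter less than `ε`, then every nonempty element of
the joined cover `⋁ᵢ (τ_{i-1}⁻¹ 𝒰ᵢ)_0^{⌈(a_1+…+a_i)n⌉-1}` lies in the weighted Bowen ball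
`B_n^a(x, ε)` around any of its points; conversely, if `δ` is a common Lebesgue number of the
covers, every Bowen ball `B_n^a(x, δ)` lies in an element of the joined cover. Comparing the
admissible families in the two definitions of `Λ` gives
`P^a(T₁, Z, ε, f) ≤ P^a(T₁, Z, {𝒰ᵢ}, f) ≤ P^a(T₁, Z, δ, f)`, and both claims follow by letting
`ε → 0`.
-/

lemma iInf_tsum_covers_mono {Y : Type*} (w : ℕ × Set Y → ℝ≥0∞) (Z : Set Y)
    {P Q : ℕ × Set Y → Prop} (hPQ : ∀ p, P p → p.2.Nonempty → Q p) :
    ⨅ (D : Set (ℕ × Set Y)) (_ : D.Countable) (_ : ∀ p ∈ D, Q p) (_ : Z ⊆ ⋃ p ∈ D, p.2),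
        ∑' p : D, w p
      ≤ ⨅ (D : Set (ℕ × Set Y)) (_ : D.Countable) (_ : ∀ p ∈ D, P p) (_ : Z ⊆ ⋃ p ∈ D, p.2),
        ∑' p : D, w p := by
  refine le_iInf fun D => le_iInf fun hD => le_iInf fun hP => le_iInf fun hZ => ?_
  let D' : Set (ℕ × Set Y) := {p ∈ D | p.2.Nonempty}
  have hD' : D' ⊆ D := fun p hp => hp.1
  have hZ' : Z ⊆ ⋃ p ∈ D', p.2 := fun z hz => by
    obtain ⟨p, hp, hzp⟩ := mem_iUnion₂.1 (hZ hz)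
    exact mem_iUnion₂.2 ⟨p, ⟨hp, z, hzp⟩, hzp⟩
  calc _ ≤ ∑' p : D', w p :=
        iInf₂_le_of_le D' (hD.mono hD') <|
          iInf₂_le_of_le (fun p hp => hPQ p (hP p hp.1) hp.2) hZ' le_rfl
    _ ≤ ∑' p : D, w p := ENNReal.tsum_mono_subtype w hD'

lemma sInf_zero_set_mono {μ ν : ℝ → ℝ≥0∞} (h : ∀ s, μ s ≤ ν s) :
    sInf (Real.toEReal '' {s | μ s = 0}) ≤ sInf (Real.toEReal '' {s | ν s = 0}) :=
  sInf_le_sInf <| image_mono fun s hs => nonpos_iff_eq_zero.1 <| (h s).trans_eq hs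

section Comparison

variable {X : Fin k → Type*} [∀ i, MetricSpace (X i)] {X1 : Type*} {T1 : X1 → X1}
  {T : ∀ i, X i → X i} {τ : ∀ i, X1 → X i} {𝒰 : ∀ i, Set (Set (X i))} {a : Fin k → ℝ} {n : ℕ}
  {ε : ℝ}

lemma jointFiber_subset_wBowen (hτ : ∀ i, Function.Semiconj (τ i) T1 (T i))
    (h𝒰 : ∀ i, ∀ U ∈ 𝒰 i, ∀ x ∈ U, ∀ y ∈ U, dist x y < ε)
    {A : Set X1} (hA : A ∈ jointFiber T1 a (fun i => pullCov (τ i) (𝒰 i)) n) {x : X1}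
    (hx : x ∈ A) : A ⊆ wBowen T τ a n x ε := by
  obtain ⟨V, hV, rfl⟩ := hA
  intro y hy i l hl
  obtain ⟨U, hU, hVU⟩ := hV i l hl
  have hmem : ∀ z ∈ ⋂ i, ⋂ l ∈ Finset.range ⌈cw a i * n⌉₊, T1^[l] ⁻¹' V i l,
      (T i)^[l] (τ i z) ∈ U := fun z hz => by
    have hzV : T1^[l] z ∈ V i l := mem_iInter₂.1 (mem_iInter.1 hz i) l (Finset.mem_range.2 hl)
    rw [← hVU] at hzV
    rwa [← (hτ i).iterate_right l z]
  exact h𝒰 i U hU _ (hmem x hx) _ (hmem y hy)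

lemma exists_jointFiber_superset_wBowen (hτ : ∀ i, Function.Semiconj (τ i) T1 (T i))
    (h𝒰 : ∀ i, ∀ y : X i, ∃ U ∈ 𝒰 i, Metric.ball y ε ⊆ U) (x : X1) :
    ∃ A ∈ jointFiber T1 a (fun i => pullCov (τ i) (𝒰 i)) n, wBowen T τ a n x ε ⊆ A := by
  choose U hU hball using h𝒰
  refine ⟨_, ⟨fun i l => τ i ⁻¹' U i ((T i)^[l] (τ i x)),
    fun i l _ => ⟨_, hU i _, rfl⟩, rfl⟩, fun y hy => ?_⟩
  refine mem_iInter.2 fun i => mem_iInter₂.2 fun l hl => hball i _ ?_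
  rw [Metric.mem_ball', (hτ i).iterate_right l y]
  exact hy i l (Finset.mem_range.1 hl)

variable [NeZero k] [MeasurableSpace X1] (f : X1 → ℝ) (Z : Set X1)

lemma PBowenEps_le_PLoc (hτ : ∀ i, Function.Semiconj (τ i) T1 (T i))
    (h𝒰 : ∀ i, ∀ U ∈ 𝒰 i, ∀ x ∈ U, ∀ y ∈ U, dist x y < ε) :
    PBowenEps T1 T τ a Z f ε ≤ PLoc T1 a (fun i => pullCov (τ i) (𝒰 i)) Z f :=
  sInf_zero_set_mono fun _ => iSup_mono fun _ =>
    iInf_tsum_covers_mono (fun p => pterm T1 f (a 0) _ p.1 p.2) Z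
      fun _ ⟨hN, hmeas, _, hA, hpA⟩ ⟨x, hx⟩ =>
        ⟨hN, hmeas, x, hpA.trans (jointFiber_subset_wBowen hτ h𝒰 hA (hpA hx))⟩

lemma PLoc_le_PBowenEps (hτ : ∀ i, Function.Semiconj (τ i) T1 (T i))
    (h𝒰 : ∀ i, ∀ y : X i, ∃ U ∈ 𝒰 i, Metric.ball y ε ⊆ U) :
    PLoc T1 a (fun i => pullCov (τ i) (𝒰 i)) Z f ≤ PBowenEps T1 T τ a Z f ε :=
  sInf_zero_set_mono fun _ => iSup_mono fun _ =>
    iInf_tsum_covers_mono (fun p => pterm T1 f (a 0) _ p.1 p.2) Z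
      fun _ ⟨hN, hmeas, x, hpB⟩ _ =>
        let ⟨A, hA, hBA⟩ := exists_jointFiber_superset_wBowen hτ h𝒰 x
        ⟨hN, hmeas, A, hA, hpB.trans hBA⟩

end Comparison

lemma exists_pos_lebesgue_number {ι : Type*} [Finite ι] {Y : ι → Type*}
    [∀ i, MetricSpace (Y i)] [∀ i, CompactSpace (Y i)] {𝒰 : ∀ i, Set (Set (Y i))}
    (h𝒰 : ∀ i, IsOpenCover (𝒰 i)) :
    ∃ δ > 0, ∀ i, ∀ y : Y i, ∃ U ∈ 𝒰 i, Metric.ball y δ ⊆ U := by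
  have hsmall : ∀ i, ∀ᶠ δ in 𝓝[>] (0 : ℝ), ∀ y : Y i, ∃ U ∈ 𝒰 i, Metric.ball y δ ⊆ U := by
    intro i
    obtain ⟨δ, hδ, hleb⟩ :=
      lebesgue_number_lemma_of_metric_sUnion isCompact_univ (h𝒰 i).2.1 (h𝒰 i).2.2.ge
    filter_upwards [Ioo_mem_nhdsGT hδ] with δ' hδ' y
    obtain ⟨U, hU, hball⟩ := hleb y (mem_univ y)
    exact ⟨U, hU, (Metric.ball_subset_ball hδ'.2.le).trans hball⟩
  obtain ⟨δ, hleb, hδ⟩ := ((eventually_all.2 hsmall).and self_mem_nhdsWithin).exists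
  exact ⟨δ, hδ, hleb⟩

lemma exists_isOpenCover_dist_lt (Y : Type*) [MetricSpace Y] [CompactSpace Y] {ε : ℝ}
    (hε : 0 < ε) :
    ∃ 𝒰 : Set (Set Y), IsOpenCover 𝒰 ∧ ∀ U ∈ 𝒰, ∀ x ∈ U, ∀ y ∈ U, dist x y < ε := by
  obtain ⟨t, -, ht, hcover⟩ :=
    finite_cover_balls_of_compact (isCompact_univ (X := Y)) (half_pos hε)
  refine ⟨(Metric.ball · (ε / 2)) '' t, ⟨ht.image _, ?_, ?_⟩, ?_⟩
  · rintro _ ⟨y, -, rfl⟩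
    exact Metric.isOpen_ball
  · simpa only [sUnion_image, univ_subset_iff] using hcover
  · rintro _ ⟨c, -, rfl⟩ x hx y hy
    linarith [dist_triangle_right x y c, Metric.mem_ball.1 hx, Metric.mem_ball.1 hy]

lemma PLoc_le_PBowen [NeZero k] {X : Fin k → Type*} [∀ i, MetricSpace (X i)]
    [∀ i, CompactSpace (X i)] {X1 : Type*} [MeasurableSpace X1] {T1 : X1 → X1}
    {T : ∀ i, X i → X i} {τ : ∀ i, X1 → X i} (hτ : ∀ i, Function.Semiconj (τ i) T1 (T i))
    {𝒰 : ∀ i, Set (Set (X i))} (h𝒰 : ∀ i, IsOpenCover (𝒰 i)) (a : Fin k → ℝ) (Z : Set X1)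
    (f : X1 → ℝ) :
    PLoc T1 a (fun i => pullCov (τ i) (𝒰 i)) Z f ≤ PBowen T1 T τ a Z f := by
  obtain ⟨δ, hδ, hleb⟩ := exists_pos_lebesgue_number h𝒰
  exact (PLoc_le_PBowenEps f Z hτ hleb).trans (le_iSup_of_le ⟨δ, hδ⟩ le_rfl)

theorem weighted_pressure_eq_sup_local_pressure_general
    {k : ℕ} [NeZero k]
    (X : Fin k → Type) [∀ i, MetricSpace (X i)] [∀ i, CompactSpace (X i)]
    [∀ i, MeasurableSpace (X i)]
    (T : ∀ i, X i → X i)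
    (τ : ∀ i, X 0 → X i)
    (hτe : ∀ i, τ i ∘ T 0 = T i ∘ τ i)
    (a : Fin k → ℝ)
    (Z : Set (X 0)) (f : X 0 → ℝ) :
    (PBowen (T 0) T τ a Z f
        = ⨆ 𝒰 : {𝒰 : ∀ i, Set (Set (X i)) // ∀ i, IsOpenCover (𝒰 i)},
            PLoc (T 0) a (fun i => pullCov (τ i) (𝒰.1 i)) Z f)
    ∧ (∀ 𝒰s : ℕ → ∀ i, Set (Set (X i)),
        (∀ n i, IsOpenCover (𝒰s n i)) →
        (∀ ε : ℝ, 0 < ε → ∃ N : ℕ, ∀ n ≥ N, ∀ i, ∀ U ∈ 𝒰s n i, Metric.diam U < ε) →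
        Filter.Tendsto (fun n => PLoc (T 0) a (fun i => pullCov (τ i) (𝒰s n i)) Z f)
          Filter.atTop (nhds (PBowen (T 0) T τ a Z f))) := by
  have hτ : ∀ i, Function.Semiconj (τ i) (T 0) (T i) := fun i => congrFun (hτe i)
  refine ⟨le_antisymm (iSup_le fun ε => ?_) (iSup_le fun 𝒰 => PLoc_le_PBowen hτ 𝒰.2 a Z f),
    fun 𝒰s h𝒰s hdiam => tendsto_order.2 ⟨fun b hb => ?_, fun b hb =>
      Eventually.of_forall fun n => (PLoc_le_PBowen hτ (h𝒰s n) a Z f).trans_lt hb⟩⟩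
  · choose 𝒰 h𝒰 hsmall using fun i => exists_isOpenCover_dist_lt (X i) ε.2
    exact (PBowenEps_le_PLoc f Z hτ hsmall).trans (le_iSup_of_le ⟨𝒰, h𝒰⟩ le_rfl)
  · obtain ⟨ε, hbε⟩ := lt_iSup_iff.1 hb
    obtain ⟨N, hN⟩ := hdiam ε.1 ε.2
    filter_upwards [eventually_ge_atTop N] with n hn
    refine hbε.trans_le (PBowenEps_le_PLoc f Z hτ fun i U hU x hx y hy => ?_)
    exact (Metric.dist_le_diam_of_mem Metric.isBounded_of_compactSpace hx hy).trans_lt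
      (hN n hn i U hU)

/-- The 𝐚-weighted topological pressure of any subset `Z` equals both the
supremum over all tuples of open covers of the local 𝐚-weighted pressures, and the limit of the
local 𝐚-weighted pressures as the maximal diameter of the covers tends to `0`. -/
theorem weighted_pressure_eq_sup_local_pressure
    {k : ℕ} [NeZero k]
    (X : Fin k → Type) [∀ i, MetricSpace (X i)] [∀ i, CompactSpace (X i)]
    [∀ i, MeasurableSpace (X i)] [∀ i, BorelSpace (X i)]
    (T : ∀ i, X i → X i) (hT : ∀ i, Continuous (T i))
    (τ : ∀ i, X 0 → X i) (hτ0 : τ 0 = id)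
    (hτc : ∀ i, Continuous (τ i)) (hτs : ∀ i, Function.Surjective (τ i))
    (hτe : ∀ i, τ i ∘ T 0 = T i ∘ τ i)
    (hchain : ∀ i j : Fin k, i ≤ j → ∃ p : X i → X j,
        Continuous p ∧ p ∘ T i = T j ∘ p ∧ p ∘ τ i = τ j)
    (a : Fin k → ℝ) (ha1 : 0 < a 0) (ha : ∀ i, 0 ≤ a i)
    (Z : Set (X 0)) (f : X 0 → ℝ) (hf : Continuous f) :
    (PBowen (T 0) T τ a Z f
        = ⨆ 𝒰 : {𝒰 : ∀ i, Set (Set (X i)) // ∀ i, IsOpenCover (𝒰 i)},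
            PLoc (T 0) a (fun i => pullCov (τ i) (𝒰.1 i)) Z f)
    ∧ (∀ 𝒰s : ℕ → ∀ i, Set (Set (X i)),
        (∀ n i, IsOpenCover (𝒰s n i)) →
        (∀ ε : ℝ, 0 < ε → ∃ N : ℕ, ∀ n ≥ N, ∀ i, ∀ U ∈ 𝒰s n i, Metric.diam U < ε) →
        Filter.Tendsto (fun n => PLoc (T 0) a (fun i => pullCov (τ i) (𝒰s n i)) Z f)
          Filter.atTop (nhds (PBowen (T 0) T τ a Z f))) :=
  weighted_pressure_eq_sup_local_pressure_general X T τ hτe a Z f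

end WTP
end

section
/- Let M ∈ ℕ, Z ⊆ X_1, f ∈ C(X_1,ℝ), and let U_i be open covers of X_i for i=1,…,k. Then P^a(T_1, Z, {U_i}_{i=1}^k, f) = (1/M) · P^a(T_1^M, Z, {(U_i)_0^{M−1}}_{i=1}^k, S_M f), where on the right-hand side the local a-weighted pressure is computed for the tower of systems (X_i, T_i^M) with the same factor maps τ_i, with open covers (U_i)_0^{M−1}=⋁_{l=0}^{M−1}T_i^{−l}U_i, and with potential S_M f = Σ_{l=0}^{M−1} f∘T_1^l. -/
open MeasureTheory Set Filter Topology
open scoped ENNReal symmDiff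

namespace WTP

variable {k : ℕ}

/-!
Pulling back along the factor maps commutes with taking joins, so everything happens on `X 0`
with the covers `𝒱 i = τ_{i-1}^{-1} 𝒰_i`. A cylinder of `(𝒱 i)_0^{M-1}` of length `n` for `T^M`
is a cylinder of `𝒱 i` of length `M n` for `T`. Conversely, a cylinder of length `m` for `T` is
covered by boundedly many (independently of `m`) cylinders of length `⌊m/M⌋ + 1` for `T^M`,
obtained by prescribing the cover elements at the at most `⌈(c + 1) M⌉` missing times.
Since `S_n(S_M f)` for `T^M` is `S_{Mn} f`, and Birkhoff sums of the bounded `f` over windows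
whose lengths differ by `O(M)` differ by `O(M)`, the weights at `(T^M, M s, n)` and at `(T, s, m)`
agree up to bounded factors. Hence `Λ^{M s}(T^M)` vanishes iff `Λ^s(T)` does, and the critical
exponents differ by the factor `M`.
-/

section PowerRule

open Function

variable {X : Type*}

theorem birk_add (T : X → X) (f : X → ℝ) (m n : ℕ) (x : X) :
    birk T f (m + n) x = birk T f m x + birk T f n (T^[m] x) :=
  birkhoffSum_add T f m n x

theorem birk_iterate (T : X → X) (f : X → ℝ) (M q : ℕ) (x : X) :
    birk (T^[M]) (birk T f M) q x = birk T f (M * q) x := by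
  induction q with
  | zero => simp [birk]
  | succ q ih =>
    rw [birk_add, ih, Nat.mul_succ, birk_add, iterate_mul]
    exact congrArg _ (birkhoffSum_one _ _ _)

theorem abs_birk_le {T : X → X} {f : X → ℝ} {F : ℝ} (hF : ∀ x, |f x| ≤ F) (n : ℕ) (x : X) :
    |birk T f n x| ≤ n * F :=
  calc |birk T f n x| ≤ ∑ l ∈ Finset.range n, |f (T^[l] x)| := Finset.abs_sum_le_sum_abs _ _
    _ ≤ ∑ _l ∈ Finset.range n, F := Finset.sum_le_sum fun _ _ => hF _
    _ = n * F := by simp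

theorem bddAbove_birk_image {T : X → X} {f : X → ℝ} {F : ℝ} (hF : ∀ x, |f x| ≤ F) (n : ℕ)
    (A : Set X) : BddAbove (birk T f n '' A) :=
  ⟨n * F, by rintro _ ⟨x, -, rfl⟩; exact (abs_le.1 (abs_birk_le hF n x)).2⟩

theorem birk_le_birk_add {T : X → X} {f : X → ℝ} {F : ℝ} (hF : ∀ x, |f x| ≤ F)
    {m m' g : ℕ} (h₁ : m' ≤ m + g) (h₂ : m ≤ m' + g) (x : X) :
    birk T f m' x ≤ birk T f m x + g * F := by
  have hF0 : 0 ≤ F := (abs_nonneg _).trans (hF x)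
  rcases le_total m m' with h | h
  · obtain ⟨d, rfl⟩ := Nat.exists_eq_add_of_le h
    have hd : (d : ℝ) ≤ g := by exact_mod_cast (by omega : d ≤ g)
    have := (abs_le.1 (abs_birk_le (T := T) hF d (T^[m] x))).2
    rw [birk_add]
    nlinarith
  · obtain ⟨d, rfl⟩ := Nat.exists_eq_add_of_le h
    have hd : (d : ℝ) ≤ g := by exact_mod_cast (by omega : d ≤ g)
    have := (abs_le.1 (abs_birk_le (T := T) hF d (T^[m'] x))).1
    rw [birk_add]
    nlinarith

theorem mul_div_add_one_le (m M : ℕ) : M * (m / M + 1) ≤ m + M := by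
  rw [Nat.mul_succ]
  exact Nat.add_le_add_right (Nat.mul_div_le m M) M

theorem ceil_mul_le_mul_ceil {c : ℝ} (hc : 0 ≤ c) {M m n : ℕ} (h : m ≤ M * n) :
    ⌈c * (m : ℝ)⌉₊ ≤ M * ⌈c * (n : ℝ)⌉₊ := by
  rw [Nat.ceil_le, Nat.cast_mul]
  calc c * m ≤ c * (M * n) := mul_le_mul_of_nonneg_left (by exact_mod_cast h) hc
    _ = M * (c * n) := by ring
    _ ≤ M * ⌈c * (n : ℝ)⌉₊ := mul_le_mul_of_nonneg_left (Nat.le_ceil _) (Nat.cast_nonneg _)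

theorem mul_ceil_le_ceil_add {c : ℝ} (hc : 0 ≤ c) {M m n : ℕ} (h : M * n ≤ m + M) :
    M * ⌈c * (n : ℝ)⌉₊ ≤ ⌈c * (m : ℝ)⌉₊ + ⌈(c + 1) * (M : ℝ)⌉₊ := by
  have h₁ : (⌈c * (n : ℝ)⌉₊ : ℝ) ≤ c * n + 1 := (Nat.ceil_lt_add_one (by positivity)).le
  have h₂ : (M : ℝ) * n ≤ m + M := by exact_mod_cast h
  have h₃ : c * (m : ℝ) ≤ ⌈c * (m : ℝ)⌉₊ := Nat.le_ceil _
  have h₄ : (c + 1) * (M : ℝ) ≤ ⌈(c + 1) * (M : ℝ)⌉₊ := Nat.le_ceil _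
  have : ((M * ⌈c * (n : ℝ)⌉₊ : ℕ) : ℝ) ≤ ((⌈c * (m : ℝ)⌉₊ + ⌈(c + 1) * (M : ℝ)⌉₊ : ℕ) : ℝ) := by
    push_cast
    nlinarith [mul_le_mul_of_nonneg_left h₁ (Nat.cast_nonneg (α := ℝ) M),
      mul_le_mul_of_nonneg_left h₂ hc]
  exact_mod_cast this

-- `hne` is needed because `sSup ∅ = 0` in `ℝ`.
theorem pterm_le_mul_pterm {T T' : X → X} {f f' : X → ℝ} {a1 s s' L G : ℝ} {n n' : ℕ}
    {A A' : Set X} (ha1 : 0 < a1) (hG : 0 ≤ G) (hA : A' ⊆ A) (hne : A.Nonempty → A'.Nonempty)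
    (hbdd : BddAbove (birk T f ⌈a1 * (n : ℝ)⌉₊ '' A)) (hlin : -(s' * n') ≤ -(s * n) + L)
    (hbirk : ∀ x ∈ A', birk T' f' ⌈a1 * (n' : ℝ)⌉₊ x ≤ birk T f ⌈a1 * (n : ℝ)⌉₊ x + G) :
    pterm T' f' a1 s' n' A' ≤ ENNReal.ofReal (Real.exp (L + G / a1)) * pterm T f a1 s n A := by
  have hsup : sSup (birk T' f' ⌈a1 * (n' : ℝ)⌉₊ '' A')
      ≤ sSup (birk T f ⌈a1 * (n : ℝ)⌉₊ '' A) + G := by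
    rcases A'.eq_empty_or_nonempty with rfl | hA'
    · obtain rfl : A = ∅ := not_nonempty_iff_eq_empty.1 fun h => (hne h).ne_empty rfl
      simpa using hG
    refine csSup_le (hA'.image _) ?_
    rintro _ ⟨x, hx, rfl⟩
    exact (hbirk x hx).trans (add_le_add (le_csSup hbdd ⟨x, hA hx, rfl⟩) le_rfl)
  rw [pterm, pterm, ← ENNReal.ofReal_mul (Real.exp_nonneg _), ← Real.exp_add]
  refine ENNReal.ofReal_le_ofReal (Real.exp_le_exp.2 ?_)
  have := mul_le_mul_of_nonneg_left hsup (one_div_pos.2 ha1).le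
  have hG' : G / a1 = 1 / a1 * G := by ring
  rw [mul_add] at this
  linarith

theorem abs_mul_sub_mul_le {M m n : ℕ} (h₁ : m ≤ M * n) (h₂ : M * n ≤ m + M) (s : ℝ) :
    |s * m - M * s * n| ≤ |s| * M := by
  have h₁' : (m : ℝ) ≤ M * n := by exact_mod_cast h₁
  have h₂' : (M : ℝ) * n ≤ m + M := by exact_mod_cast h₂
  calc |s * m - M * s * n| = |s| * |(m : ℝ) - M * n| := by rw [← abs_mul]; ring_nf
    _ ≤ |s| * M := mul_le_mul_of_nonneg_left (abs_le.2 ⟨by linarith, by linarith⟩) (abs_nonneg s)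

variable {T : X → X} {f : X → ℝ} {F a1 : ℝ}

theorem pterm_iterate_le_mul_pterm (hF : ∀ x, |f x| ≤ F) (hF0 : 0 ≤ F) (ha1 : 0 < a1) (s : ℝ)
    {M m n : ℕ} (h₁ : m ≤ M * n) (h₂ : M * n ≤ m + M) {A A' : Set X} (hA : A' ⊆ A)
    (hne : A.Nonempty → A'.Nonempty) :
    pterm (T^[M]) (birk T f M) a1 (M * s) n A'
      ≤ ENNReal.ofReal (Real.exp (|s| * M + ⌈(a1 + 1) * (M : ℝ)⌉₊ * F / a1))
        * pterm T f a1 s m A := by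
  have hlin := abs_le.1 (abs_mul_sub_mul_le h₁ h₂ s)
  refine pterm_le_mul_pterm ha1 (by positivity) hA hne (bddAbove_birk_image hF _ A)
    (by linarith) fun x _ => ?_
  rw [birk_iterate]
  exact birk_le_birk_add hF (mul_ceil_le_ceil_add ha1.le h₂)
    ((ceil_mul_le_mul_ceil ha1.le h₁).trans (Nat.le_add_right _ _)) x

theorem pterm_le_mul_pterm_iterate (hF : ∀ x, |f x| ≤ F) (hF0 : 0 ≤ F) (ha1 : 0 < a1) (s : ℝ)
    {M m n : ℕ} (h₁ : m ≤ M * n) (h₂ : M * n ≤ m + M) {A A' : Set X} (hA : A' ⊆ A)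
    (hne : A.Nonempty → A'.Nonempty) :
    pterm T f a1 s m A'
      ≤ ENNReal.ofReal (Real.exp (|s| * M + ⌈(a1 + 1) * (M : ℝ)⌉₊ * F / a1))
        * pterm (T^[M]) (birk T f M) a1 (M * s) n A := by
  have hlin := abs_le.1 (abs_mul_sub_mul_le h₁ h₂ s)
  refine pterm_le_mul_pterm ha1 (by positivity) hA hne
    (bddAbove_birk_image (abs_birk_le hF M) _ A) (by linarith) fun x _ => ?_
  rw [birk_iterate]
  exact birk_le_birk_add hF ((ceil_mul_le_mul_ceil ha1.le h₁).trans (Nat.le_add_right _ _))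
    (mul_ceil_le_ceil_add ha1.le h₂) x

end PowerRule

section Cylinders

open Function

variable {X : Type*} {T : X → X} {𝒱 : Fin k → Set (Set X)}

theorem exists_fun_of_forall_lt {α : Type*} [Nonempty α] {n : ℕ} {P : ℕ → α → Prop}
    (h : ∀ l < n, ∃ u, P l u) : ∃ u : ℕ → α, ∀ l < n, P l (u l) := by
  classical
  exact ⟨fun l => if hl : l < n then (h l hl).choose else Classical.arbitrary α,
    fun l hl => by simpa only [dif_pos hl] using (h l hl).choose_spec⟩

def cylinders (T : X → X) (𝒱 : Fin k → Set (Set X)) (L : Fin k → ℕ) : Set (Set X) :=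
  {A | ∃ V : Fin k → ℕ → Set X, (∀ i, ∀ l < L i, V i l ∈ 𝒱 i) ∧
      A = ⋂ i : Fin k, ⋂ l ∈ Finset.range (L i), (T^[l]) ⁻¹' V i l}

theorem jointFiber_eq_cylinders (T : X → X) (a : Fin k → ℝ) (𝒱 : Fin k → Set (Set X)) (n : ℕ) :
    jointFiber T a 𝒱 n = cylinders T 𝒱 fun i => ⌈cw a i * (n : ℝ)⌉₊ :=
  rfl

theorem exists_cylinders_superset {L L' : Fin k → ℕ} (hL : ∀ i, L i ≤ L' i) {B : Set X}
    (hB : B ∈ cylinders T 𝒱 L') : ∃ B' ∈ cylinders T 𝒱 L, B ⊆ B' := by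
  obtain ⟨V, hV, rfl⟩ := hB
  refine ⟨_, ⟨V, fun i l hl => hV i l (hl.trans_le (hL i)), rfl⟩, fun x hx => ?_⟩
  simp only [mem_iInter, mem_preimage, Finset.mem_range] at hx ⊢
  exact fun i l hl => hx i l (hl.trans_le (hL i))

theorem measurableSet_of_mem_cylinders [MeasurableSpace X] (hT : Measurable T)
    (h𝒱 : ∀ i, ∀ V ∈ 𝒱 i, MeasurableSet V) {L : Fin k → ℕ} {A : Set X}
    (hA : A ∈ cylinders T 𝒱 L) : MeasurableSet A := by
  obtain ⟨V, hV, rfl⟩ := hA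
  exact .iInter fun i => .biInter (Finset.range _).countable_toSet fun l hl =>
    hT.iterate l (h𝒱 i _ (hV i l (Finset.mem_range.1 hl)))

theorem forall_lt_mul_iff {M : ℕ} (hM : 0 < M) (q : ℕ) (P : ℕ → Prop) :
    (∀ j < M * q, P j) ↔ ∀ l < q, ∀ r < M, P (M * l + r) := by
  refine ⟨fun h l hl r hr => h _ ?_, fun h j hj => ?_⟩
  · calc M * l + r < M * (l + 1) := by rw [Nat.mul_succ]; omega
      _ ≤ M * q := Nat.mul_le_mul_left _ hl
  · simpa only [Nat.div_add_mod] using h (j / M) (Nat.div_lt_of_lt_mul hj) (j % M) (Nat.mod_lt j hM)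

theorem iterate_iterate_apply_add (M l r : ℕ) (x : X) :
    T^[r] ((T^[M])^[l] x) = T^[M * l + r] x := by
  rw [← iterate_mul, ← iterate_add_apply, Nat.add_comm]

theorem cylinders_iterate {M : ℕ} (hM : 0 < M) (L : Fin k → ℕ) :
    cylinders (T^[M]) (fun i => covJoinT T (𝒱 i) M) L = cylinders T 𝒱 fun i => M * L i := by
  ext B
  constructor
  · rintro ⟨V, hV, rfl⟩
    choose u hu using fun i => exists_fun_of_forall_lt (hV i)
    refine ⟨fun i j => u i (j / M) (j % M), fun i j hj => ?_, ?_⟩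
    · exact (hu i _ (Nat.div_lt_of_lt_mul hj)).1 _ (Nat.mod_lt j hM)
    ext x
    simp only [mem_iInter, mem_preimage, Finset.mem_range]
    refine forall_congr' fun i => ?_
    rw [forall_lt_mul_iff hM]
    refine forall₂_congr fun l hl => ?_
    simp only [(hu i l hl).2, mem_iInter, mem_preimage, Finset.mem_range,
      iterate_iterate_apply_add]
    refine forall₂_congr fun r hr => ?_
    rw [Nat.mul_add_div hM, Nat.div_eq_of_lt hr, Nat.add_zero, Nat.mul_add_mod, Nat.mod_eq_of_lt hr]
  · rintro ⟨W, hW, rfl⟩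
    refine ⟨fun i l => ⋂ r ∈ Finset.range M, T^[r] ⁻¹' W i (M * l + r), fun i l hl =>
      ⟨fun r => W i (M * l + r), fun r hr => hW i _ ((forall_lt_mul_iff hM _ _).1
        (fun _ h => h) l hl r hr), rfl⟩, ?_⟩
    ext x
    simp only [mem_iInter, mem_preimage, Finset.mem_range, iterate_iterate_apply_add]
    exact forall_congr' fun i => forall_lt_mul_iff hM _ _

theorem exists_cylinders_cover (h𝒱 : ∀ i, ⋃₀ 𝒱 i = univ) {L : Fin k → ℕ} (K : Fin k → ℕ)
    {B : Set X} (hB : B ∈ cylinders T 𝒱 L) :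
    ∃ C : (∀ i, Fin (K i) → 𝒱 i) → Set X,
      (∀ t, C t ∈ cylinders T 𝒱 fun i => L i + K i) ∧ B ⊆ ⋃ t, C t := by
  classical
  obtain ⟨V, hV, rfl⟩ := hB
  refine ⟨fun t => ⋂ i, ⋂ j ∈ Finset.range (L i + K i), T^[j] ⁻¹'
      if j < L i then V i j else if h : j - L i < K i then (t i ⟨j - L i, h⟩ : Set X) else univ,
    fun t => ⟨_, fun i j hj => ?_, rfl⟩, fun x hx => ?_⟩
  · beta_reduce at hj
    split_ifs with h₁ h₂
    exacts [hV i j h₁, (t i _).2, absurd hj (by omega)]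
  have hS : ∀ i (d : Fin (K i)), ∃ S ∈ 𝒱 i, T^[L i + d] x ∈ S := fun i d => by
    simpa only [← mem_sUnion, h𝒱 i] using mem_univ _
  choose S hS𝒱 hSx using hS
  simp only [mem_iInter, mem_preimage, Finset.mem_range] at hx
  refine mem_iUnion.2 ⟨fun i d => ⟨S i d, hS𝒱 i d⟩, ?_⟩
  simp only [mem_iInter, mem_preimage, Finset.mem_range]
  intro i j hj
  split_ifs with h₁ h₂
  · exact hx i j h₁
  · simpa only [Nat.add_sub_cancel' (not_lt.1 h₁)] using hSx i ⟨j - L i, h₂⟩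
  · trivial

variable {a : Fin k → ℝ} {M m n : ℕ}

theorem exists_jointFiber_superset_of_iterate (hc : ∀ i, 0 ≤ cw a i) (hM : 0 < M)
    (h : m ≤ M * n) {B : Set X}
    (hB : B ∈ jointFiber (T^[M]) a (fun i => covJoinT T (𝒱 i) M) n) :
    ∃ B' ∈ jointFiber T a 𝒱 m, B ⊆ B' := by
  rw [jointFiber_eq_cylinders, cylinders_iterate hM] at hB
  exact exists_cylinders_superset (fun i => ceil_mul_le_mul_ceil (hc i) h) hB

theorem exists_jointFiber_iterate_superset (hc : ∀ i, 0 ≤ cw a i) (hM : 0 < M)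
    (h : M * n ≤ m + M) {C : Set X}
    (hC : C ∈ cylinders T 𝒱 fun i => ⌈cw a i * (m : ℝ)⌉₊ + ⌈(cw a i + 1) * (M : ℝ)⌉₊) :
    ∃ B' ∈ jointFiber (T^[M]) a (fun i => covJoinT T (𝒱 i) M) n, C ⊆ B' := by
  rw [jointFiber_eq_cylinders, cylinders_iterate hM]
  exact exists_cylinders_superset (fun i => mul_ceil_le_ceil_add (hc i) h) hC

end Cylinders

theorem sInf_coe_image_const_mul {c : ℝ} (hc : 0 < c) (S : Set ℝ) :
    sInf (Real.toEReal '' ((c * ·) '' S)) = c * sInf (Real.toEReal '' S) := by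
  have hc0 : (c : EReal) ≠ 0 := by exact_mod_cast hc.ne'
  have hcont : Continuous fun x : EReal => (c : EReal) * x :=
    continuous_iff_continuousAt.2 fun _ => (EReal.continuousAt_mul (.inl hc0) (.inl hc0)
      (.inl (EReal.coe_ne_bot c)) (.inl (EReal.coe_ne_top c))).comp
        (continuous_const.prodMk continuous_id).continuousAt
  rw [Monotone.map_sInf_of_continuousAt hcont.continuousAt
    (fun _ _ h => mul_le_mul_of_nonneg_left h (EReal.coe_nonneg.2 hc.le))
    (EReal.coe_mul_top_of_pos hc), image_image, image_image]
  simp only [EReal.coe_mul]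

theorem tsum_subtype_le_natCard_mul {ι : Type*} [Finite ι] {P : ι → Prop} {g : Subtype P → ℝ≥0∞}
    {c : ℝ≥0∞} (h : ∀ t, g t ≤ c) : ∑' t, g t ≤ Nat.card ι * c :=
  calc ∑' t, g t ≤ ∑' _ : Subtype P, c := ENNReal.tsum_le_tsum h
    _ = Nat.card (Subtype P) * c := by rw [ENNReal.tsum_const, ENat.card_eq_coe_natCard]; rfl
    _ ≤ Nat.card ι * c := by gcongr; exact Finite.card_subtype_le P

section Pressure

variable [NeZero k] {X : Type*} [MeasurableSpace X] {T : X → X} {a : Fin k → ℝ}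
  {𝒱 : Fin k → Set (Set X)} {f : X → ℝ} {s : ℝ} {N : ℕ} {Z : Set X}

theorem lamLocN_le_tsum {ι : Type*} [Countable ι] (G : ι → ℕ × Set X)
    (hG : ∀ j, N ≤ (G j).1 ∧ MeasurableSet (G j).2 ∧
      ∃ A ∈ jointFiber T a 𝒱 (G j).1, (G j).2 ⊆ A)
    (hZ : Z ⊆ ⋃ j, (G j).2) :
    lamLocN T a 𝒱 f s N Z ≤ ∑' j, pterm T f (a 0) s (G j).1 (G j).2 := by
  refine iInf₂_le_of_le (range G) (countable_range G) (iInf₂_le_of_le ?_ ?_ ?_)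
  · rintro _ ⟨j, rfl⟩
    exact hG j
  · intro z hz
    obtain ⟨j, hj⟩ := mem_iUnion.1 (hZ hz)
    exact mem_iUnion₂.2 ⟨_, ⟨j, rfl⟩, hj⟩
  · exact ENNReal.tsum_le_tsum_comp_of_surjective rangeFactorization_surjective
      fun p : range G => pterm T f (a 0) s p.1.1 p.1.2

theorem le_mul_lamLocN {x C : ℝ≥0∞} (hC0 : C ≠ 0) (hC : C ≠ ⊤)
    (h : ∀ D : Set (ℕ × Set X), D.Countable →
      (∀ p ∈ D, N ≤ p.1 ∧ MeasurableSet p.2 ∧ ∃ A ∈ jointFiber T a 𝒱 p.1, p.2 ⊆ A) →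
      Z ⊆ ⋃ p ∈ D, p.2 → x ≤ C * ∑' p : D, pterm T f (a 0) s p.1.1 p.1.2) :
    x ≤ C * lamLocN T a 𝒱 f s N Z := by
  simp only [lamLocN, ENNReal.mul_iInf_of_ne hC0 hC]
  exact le_iInf₂ fun D hD => le_iInf₂ fun hDadm hZ => h D hD hDadm hZ

variable {F : ℝ} {M : ℕ}

theorem lamLocN_le_mul_lamLocN_iterate (ha1 : 0 < a 0) (hc : ∀ i, 0 ≤ cw a i)
    (hF : ∀ x, |f x| ≤ F) (hF0 : 0 ≤ F) (hM : 0 < M) (s : ℝ) (N : ℕ) (Z : Set X) :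
    lamLocN T a 𝒱 f s N Z
      ≤ ENNReal.ofReal (Real.exp (|s| * M + ⌈(a 0 + 1) * (M : ℝ)⌉₊ * F / a 0))
        * lamLocN (T^[M]) a (fun i => covJoinT T (𝒱 i) M) (birk T f M) (M * s) N Z := by
  refine le_mul_lamLocN (ENNReal.ofReal_pos.2 (Real.exp_pos _)).ne' ENNReal.ofReal_ne_top
    fun D hD hDadm hZ => ?_
  have := hD.to_subtype
  refine (lamLocN_le_tsum (fun p : D => (M * p.1.1, p.1.2)) (fun p => ?_) ?_).trans ?_
  · obtain ⟨hN, hp, B, hB, hpB⟩ := hDadm p p.2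
    obtain ⟨B', hB', hBB'⟩ := exists_jointFiber_superset_of_iterate hc hM le_rfl hB
    exact ⟨hN.trans (Nat.le_mul_of_pos_left _ hM), hp, B', hB', hpB.trans hBB'⟩
  · simpa only [iUnion_subtype] using hZ
  · rw [← ENNReal.tsum_mul_left]
    exact ENNReal.tsum_le_tsum fun p =>
      pterm_le_mul_pterm_iterate hF hF0 ha1 s le_rfl (Nat.le_add_right _ _) subset_rfl id

-- The `+ 1` only keeps the constant nonzero when the index type is empty.
theorem lamLocN_iterate_le_mul_lamLocN (hT : Measurable T) (ha1 : 0 < a 0)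
    (hc : ∀ i, 0 ≤ cw a i) (h𝒱fin : ∀ i, (𝒱 i).Finite) (h𝒱meas : ∀ i, ∀ V ∈ 𝒱 i, MeasurableSet V)
    (h𝒱 : ∀ i, ⋃₀ 𝒱 i = univ) (hF : ∀ x, |f x| ≤ F) (hF0 : 0 ≤ F) (hM : 0 < M) (s : ℝ)
    (N : ℕ) (Z : Set X) :
    lamLocN (T^[M]) a (fun i => covJoinT T (𝒱 i) M) (birk T f M) (M * s) N Z
      ≤ (Nat.card (∀ i, Fin ⌈(cw a i + 1) * (M : ℝ)⌉₊ → 𝒱 i) + 1)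
        * ENNReal.ofReal (Real.exp (|s| * M + ⌈(a 0 + 1) * (M : ℝ)⌉₊ * F / a 0))
        * lamLocN T a 𝒱 f s (M * N) Z := by
  set ι := ∀ i, Fin ⌈(cw a i + 1) * (M : ℝ)⌉₊ → 𝒱 i
  have := fun i => (h𝒱fin i).to_subtype
  set C₀ := ENNReal.ofReal (Real.exp (|s| * M + ⌈(a 0 + 1) * (M : ℝ)⌉₊ * F / a 0))
  refine le_mul_lamLocN (mul_ne_zero (by simp) (ENNReal.ofReal_pos.2 (Real.exp_pos _)).ne')
    (ENNReal.mul_ne_top (by simp) ENNReal.ofReal_ne_top) fun D hD hDadm hZ => ?_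
  have := hD.to_subtype
  have hcover : ∀ p : D, ∃ C : ι → Set X,
      (∀ t, C t ∈ cylinders T 𝒱 fun i => ⌈cw a i * (p.1.1 : ℝ)⌉₊ + ⌈(cw a i + 1) * (M : ℝ)⌉₊)
        ∧ p.1.2 ⊆ ⋃ t, C t := fun p => by
    obtain ⟨-, -, B, hB, hpB⟩ := hDadm p p.2
    obtain ⟨C, hC, hBC⟩ := exists_cylinders_cover h𝒱 _ hB
    exact ⟨C, hC, hpB.trans hBC⟩
  choose C hC hpC using hcover
  -- pieces missing `p.2` are dropped: the weight of `∅` is not controlled by that of `p.2`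
  refine (lamLocN_le_tsum (ι := Σ p : D, {t : ι // (p.1.2 ∩ C p t).Nonempty})
    (fun q => (q.1.1.1 / M + 1, q.1.1.2 ∩ C q.1 q.2.1)) (fun q => ?_) ?_).trans ?_
  · obtain ⟨hN, hp, -⟩ := hDadm q.1 q.1.2
    obtain ⟨B', hB', hCB'⟩ :=
      exists_jointFiber_iterate_superset hc hM (mul_div_add_one_le _ _) (hC q.1 q.2.1)
    exact ⟨(Nat.le_div_iff_mul_le hM).2 (Nat.mul_comm N M ▸ hN) |>.trans (Nat.le_succ _),
      hp.inter (measurableSet_of_mem_cylinders hT h𝒱meas (hC q.1 q.2.1)), B', hB',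
      inter_subset_right.trans hCB'⟩
  · intro z hz
    obtain ⟨p, hpD, hzp⟩ := mem_iUnion₂.1 (hZ hz)
    obtain ⟨t, hzt⟩ := mem_iUnion.1 (hpC ⟨p, hpD⟩ hzp)
    exact mem_iUnion.2 ⟨⟨⟨p, hpD⟩, t, z, hzp, hzt⟩, hzp, hzt⟩
  rw [ENNReal.tsum_sigma', ← ENNReal.tsum_mul_left]
  refine ENNReal.tsum_le_tsum fun p => ?_
  calc _ ≤ Nat.card ι * (C₀ * pterm T f (a 0) s p.1.1 p.1.2) :=
        tsum_subtype_le_natCard_mul fun t => pterm_iterate_le_mul_pterm hF hF0 ha1 s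
          (Nat.lt_mul_div_succ _ hM).le (mul_div_add_one_le _ _) inter_subset_left
          fun _ => t.2
    _ ≤ (Nat.card ι + 1) * C₀ * pterm T f (a 0) s p.1.1 p.1.2 := by
        rw [mul_assoc]
        gcongr
        exact le_self_add

theorem lamLoc_eq_zero_iff_iterate (hT : Measurable T) (ha1 : 0 < a 0)
    (hc : ∀ i, 0 ≤ cw a i) (h𝒱fin : ∀ i, (𝒱 i).Finite) (h𝒱meas : ∀ i, ∀ V ∈ 𝒱 i, MeasurableSet V)
    (h𝒱 : ∀ i, ⋃₀ 𝒱 i = univ) (hF : ∀ x, |f x| ≤ F) (hF0 : 0 ≤ F) (hM : 0 < M) (s : ℝ)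
    (Z : Set X) :
    lamLoc T a 𝒱 f s Z = 0 ↔
      lamLoc (T^[M]) a (fun i => covJoinT T (𝒱 i) M) (birk T f M) (M * s) Z = 0 := by
  simp only [lamLoc, ENNReal.iSup_eq_zero]
  refine ⟨fun h N => ?_, fun h N => ?_⟩
  · simpa [h (M * N)] using
      lamLocN_iterate_le_mul_lamLocN hT ha1 hc h𝒱fin h𝒱meas h𝒱 hF hF0 hM s N Z
  · simpa [h N] using lamLocN_le_mul_lamLocN_iterate (T := T) (𝒱 := 𝒱) ha1 hc hF hF0 hM s N Z

theorem PLoc_eq_inv_mul_PLoc_iterate (hT : Measurable T) (ha1 : 0 < a 0)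
    (hc : ∀ i, 0 ≤ cw a i) (h𝒱fin : ∀ i, (𝒱 i).Finite) (h𝒱meas : ∀ i, ∀ V ∈ 𝒱 i, MeasurableSet V)
    (h𝒱 : ∀ i, ⋃₀ 𝒱 i = univ) (hF : ∀ x, |f x| ≤ F) (hF0 : 0 ≤ F) (hM : 0 < M)
    (Z : Set X) :
    PLoc T a 𝒱 Z f = (((M : ℝ)⁻¹ : ℝ) : EReal) *
      PLoc (T^[M]) a (fun i => covJoinT T (𝒱 i) M) Z (birk T f M) := by
  have hM' : (M : ℝ) ≠ 0 := Nat.cast_ne_zero.2 hM.ne'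
  have hzero : {s | lamLoc T a 𝒱 f s Z = 0} = (fun s => (M : ℝ)⁻¹ * s) ''
      {s | lamLoc (T^[M]) a (fun i => covJoinT T (𝒱 i) M) (birk T f M) s Z = 0} := by
    ext s
    rw [mem_ofPred_eq, lamLoc_eq_zero_iff_iterate hT ha1 hc h𝒱fin h𝒱meas h𝒱 hF hF0 hM]
    exact ⟨fun h => ⟨_, h, inv_mul_cancel_left₀ hM' s⟩,
      by rintro ⟨s', h, rfl⟩; simpa only [mul_inv_cancel_left₀ hM', mem_ofPred_eq] using h⟩
  rw [PLoc, PLoc, hzero, sInf_coe_image_const_mul (inv_pos.2 (Nat.cast_pos.2 hM))]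

end Pressure

theorem pullCov_covJoinT {X Y : Type*} {g : X → Y} {S : X → X} {T : Y → Y}
    (h : g ∘ S = T ∘ g) (𝒰 : Set (Set Y)) (n : ℕ) :
    pullCov g (covJoinT T 𝒰 n) = covJoinT S (pullCov g 𝒰) n := by
  have hiter : ∀ l x, g (S^[l] x) = T^[l] (g x) :=
    (Function.semiconj_iff_comp_eq.2 h).iterate_right
  ext A
  constructor
  · rintro ⟨_, ⟨u, hu, rfl⟩, rfl⟩
    refine ⟨fun l => g ⁻¹' u l, fun l hl => ⟨u l, hu l hl, rfl⟩, ?_⟩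
    ext x
    simp only [mem_preimage, mem_iInter, hiter]
  · rintro ⟨v, hv, rfl⟩
    obtain ⟨u, hu⟩ := exists_fun_of_forall_lt hv
    refine ⟨_, ⟨u, fun l hl => (hu l hl).1, rfl⟩, ?_⟩
    ext x
    simp only [mem_preimage, mem_iInter, Finset.mem_range, ← hiter]
    exact forall₂_congr fun l hl => by rw [← (hu l hl).2, mem_preimage]

theorem local_weighted_pressure_power_general
    {k : ℕ} [NeZero k]
    (X : Fin k → Type) [∀ i, MetricSpace (X i)] [∀ i, CompactSpace (X i)]
    [∀ i, MeasurableSpace (X i)] [∀ i, BorelSpace (X i)]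
    (T : ∀ i, X i → X i) (hT : ∀ i, Continuous (T i))
    (τ : ∀ i, X 0 → X i)
    (hτc : ∀ i, Continuous (τ i))
    (hτe : ∀ i, τ i ∘ T 0 = T i ∘ τ i)
    (a : Fin k → ℝ) (ha1 : 0 < a 0) (ha : ∀ i, 0 ≤ a i)
    (M : ℕ) (hM : 0 < M) (Z : Set (X 0)) (f : X 0 → ℝ) (hf : Continuous f)
    (𝒰 : ∀ i, Set (Set (X i))) (h𝒰 : ∀ i, IsOpenCover (𝒰 i)) :
    PLoc (T 0) a (fun i => pullCov (τ i) (𝒰 i)) Z f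
      = (((M : ℝ)⁻¹ : ℝ) : EReal) *
        PLoc ((T 0)^[M]) a (fun i => pullCov (τ i) (covJoinT (T i) (𝒰 i) M)) Z
          (birk (T 0) f M) := by
  have hjoin : (fun i => pullCov (τ i) (covJoinT (T i) (𝒰 i) M))
      = fun i => covJoinT (T 0) (pullCov (τ i) (𝒰 i)) M :=
    funext fun i => pullCov_covJoinT (hτe i) (𝒰 i) M
  obtain ⟨F, hF⟩ := isCompact_univ.exists_bound_of_continuousOn hf.continuousOn
  rw [hjoin]
  refine PLoc_eq_inv_mul_PLoc_iterate (hT 0).measurable ha1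
    (fun i => Finset.sum_nonneg fun j _ => ha j) (fun i => (h𝒰 i).1.image _) ?_ ?_
    (F := max F 0) (fun x => (hF x (mem_univ x)).trans (le_max_left _ _)) (le_max_right _ _) hM Z
  · rintro i _ ⟨U, hU, rfl⟩
    exact ((h𝒰 i).2.1 U hU).measurableSet.preimage (hτc i).measurable
  · intro i
    simp only [sUnion_image, ← preimage_iUnion₂, ← sUnion_eq_biUnion, (h𝒰 i).2.2,
      preimage_univ]

/-- power rule for the local 𝐚-weighted pressure:
`P^𝐚(T₁, Z, {𝒰_i}, f) = (1/M) · P^𝐚(T₁^M, Z, {(𝒰_i)_0^{M-1}}, S_M f)`. -/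
theorem local_weighted_pressure_power
    {k : ℕ} [NeZero k]
    (X : Fin k → Type) [∀ i, MetricSpace (X i)] [∀ i, CompactSpace (X i)]
    [∀ i, MeasurableSpace (X i)] [∀ i, BorelSpace (X i)]
    (T : ∀ i, X i → X i) (hT : ∀ i, Continuous (T i))
    (τ : ∀ i, X 0 → X i) (hτ0 : τ 0 = id)
    (hτc : ∀ i, Continuous (τ i)) (hτs : ∀ i, Function.Surjective (τ i))
    (hτe : ∀ i, τ i ∘ T 0 = T i ∘ τ i)
    (hchain : ∀ i j : Fin k, i ≤ j → ∃ p : X i → X j,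
        Continuous p ∧ p ∘ T i = T j ∘ p ∧ p ∘ τ i = τ j)
    (a : Fin k → ℝ) (ha1 : 0 < a 0) (ha : ∀ i, 0 ≤ a i)
    (M : ℕ) (hM : 0 < M) (Z : Set (X 0)) (f : X 0 → ℝ) (hf : Continuous f)
    (𝒰 : ∀ i, Set (Set (X i))) (h𝒰 : ∀ i, IsOpenCover (𝒰 i)) :
    PLoc (T 0) a (fun i => pullCov (τ i) (𝒰 i)) Z f
      = (((M : ℝ)⁻¹ : ℝ) : EReal) *
        PLoc ((T 0)^[M]) a (fun i => pullCov (τ i) (covJoinT (T i) (𝒰 i) M)) Z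
          (birk (T 0) f M) :=
  local_weighted_pressure_power_general X T hT τ hτc hτe a ha1 ha M hM Z f hf 𝒰 h𝒰

end WTP
end
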